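/- arXiv:2402.05818 — 6 statements merged into one kernel-verified Lean document; each statement's English description precedes it below -/
import Mathlib

section
/- Let k be a positive integer, L = {ℓ_1 < ... < ℓ_s} ⊆ {0,...,k-1}, and L^C = {0,...,k-1} \ L = {ℓ'_1 < ... < ℓ'_{k-s}}. Suppose L decomposes into b maximal runs of consecutive integers of lengths m_1,...,m_b, and L^C into b' maximal runs of lengths m'_1,...,m'_{b'}. Then (∏_{i=1}^{b} m_i!) · C(k,k-ℓ_1)·C(k-ℓ_1-1,k-ℓ_2)⋯C(k-ℓ_{s-1}-1,k-ℓ_s) / ∏_{i=1}^{s}(ℓ_i+1)(k-ℓ_i) multiplied by (∏_{j=1}^{b'} m'_j!) · C(k,k-ℓ'_1)·C(k-ℓ'_1-1,k-ℓ'_2)⋯C(k-ℓ'_{k-s-1}-1,k-ℓ'_{k-s}) / ∏_{i=1}^{k-s}(ℓ'_i+1)(k-ℓ'_i) equals 1/k!. -/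
/-- The length of the maximal run of consecutive integers in `L` starting at `a`
(for `a ∈ L`): the least `r` with `a + r ∉ L`. -/
noncomputable def runLen (L : Finset ℕ) (a : ℕ) : ℕ := sInf {r | a + r ∉ L}

/-- The product of the factorials of the lengths of the maximal runs of
consecutive integers in `L` (a run starts at `a ∈ L` iff `a = 0` or `a - 1 ∉ L`). -/
noncomputable def runFactProd (L : Finset ℕ) : ℕ :=
  ∏ a ∈ L.filter (fun a => a = 0 ∨ a - 1 ∉ L), (runLen L a).factorial

/-!
Write `g_i = ℓ_i - ℓ_{i-1} - 1` (with `ℓ_0 = -1`) for the gap of `L` before `ℓ_i`. Since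
`C(k-ℓ_{i-1}-1, k-ℓ_i) = C(k-ℓ_{i-1}-1, g_i)`, the binomial chain of `L` telescopes:
multiplied by `∏ g_i!`, by `(k-1-ℓ_s)!` and by `∏ (k-ℓ_i)` it is `k!`. The nonzero gaps are
exactly the runs of `L^C`, so the chain of `L` times the run factorials of `L^C` times
`∏ (k-ℓ_i)` is `k!`; this is proved by peeling off `ℓ_1`. Applying it to `L` and to `L^C` and
using `∏_{a<k} (a+1) = ∏_{a<k} (k-a) = k!` for the denominators gives the identity.
-/

open Finset
open scoped Nat

lemma add_mem_of_lt_runLen {L : Finset ℕ} {a i : ℕ} (hi : i < runLen L a) : a + i ∈ L := by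
  by_contra h
  exact Nat.notMem_of_lt_sInf hi h

lemma add_runLen_notMem (L : Finset ℕ) (a : ℕ) : a + runLen L a ∉ L := by
  obtain ⟨x, hx⟩ := (L.image (· - a)).exists_notMem
  refine Nat.sInf_mem (s := {r | a + r ∉ L}) ⟨x, fun h => hx ?_⟩
  exact mem_image.2 ⟨a + x, h, Nat.add_sub_cancel_left _ _⟩

lemma runLen_eq {L : Finset ℕ} {a r : ℕ} (hin : ∀ i < r, a + i ∈ L) (hout : a + r ∉ L) :
    runLen L a = r := by
  refine le_antisymm (Nat.sInf_le hout) ?_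
  by_contra! h
  exact add_runLen_notMem L a (hin _ h)

lemma runFactProd_Ico (c d : ℕ) : runFactProd (Ico c d) = (d - c)! := by
  rcases le_or_gt d c with hdc | hcd
  · simp [runFactProd, Ico_eq_empty_of_le hdc, Nat.sub_eq_zero_of_le hdc]
  have hstarts : (Ico c d).filter (fun a => a = 0 ∨ a - 1 ∉ Ico c d) = {c} := by
    ext x
    simp only [mem_filter, mem_Ico, mem_singleton]
    omega
  rw [runFactProd, hstarts, prod_singleton,
    runLen_eq (r := d - c) (fun i hi => mem_Ico.2 (by omega)) (by simp; omega)]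

lemma runFactProd_union {A B : Finset ℕ} (hAB : ∀ x ∈ A, ∀ y ∈ B, x + 1 < y) :
    runFactProd (A ∪ B) = runFactProd A * runFactProd B := by
  have hdisj : Disjoint A B :=
    disjoint_left.2 fun x hxA hxB => by have := hAB x hxA x hxB; omega
  have hstarts : (A ∪ B).filter (fun a => a = 0 ∨ a - 1 ∉ A ∪ B)
      = A.filter (fun a => a = 0 ∨ a - 1 ∉ A) ∪ B.filter (fun b => b = 0 ∨ b - 1 ∉ B) := by
    rw [filter_union]
    congr 1 <;> refine filter_congr fun x hx => ?_ <;> simp only [mem_union]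
    · have : x - 1 ∉ B := fun h => by have := hAB x hx _ h; omega
      tauto
    · have : x - 1 ∉ A := fun h => by have := hAB _ h x hx; omega
      tauto
  rw [runFactProd, hstarts, prod_union (disjoint_filter_filter hdisj), runFactProd, runFactProd]
  congr 1 <;> refine prod_congr rfl fun x hx => ?_ <;> rw [mem_filter] at hx
  · refine congrArg _ (runLen_eq (fun i hi => mem_union_left _ (add_mem_of_lt_runLen hi)) ?_)
    refine notMem_union.2 ⟨add_runLen_notMem A x, fun hB => ?_⟩
    rcases Nat.eq_zero_or_pos (runLen A x) with h0 | hpos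
    · have := hAB x hx.1 _ hB
      omega
    · have := hAB _ (add_mem_of_lt_runLen (Nat.sub_lt hpos one_pos)) _ hB
      omega
  · refine congrArg _ (runLen_eq (fun i hi => mem_union_right _ (add_mem_of_lt_runLen hi)) ?_)
    refine notMem_union.2 ⟨fun hA => ?_, add_runLen_notMem B x⟩
    have := hAB _ hA x hx.1
    omega

def chainChoose (n k : ℕ) (ℓ : ℕ → ℕ) (s : ℕ) : ℕ :=
  ∏ i ∈ range s, Nat.choose (if i = 0 then n else k - ℓ (i - 1) - 1) (k - ℓ i)

lemma chainChoose_succ (n k : ℕ) (ℓ : ℕ → ℕ) (s : ℕ) :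
    chainChoose n k ℓ (s + 1)
      = n.choose (k - ℓ 0) * chainChoose (k - (ℓ 0 + 1)) k (fun i => ℓ (i + 1)) s := by
  rw [chainChoose, prod_range_succ', mul_comm, chainChoose]
  congr 1
  refine prod_congr rfl fun i _ => ?_
  rcases i with _ | i <;> simp [Nat.sub_sub]

lemma Ico_sdiff_insert {c a k : ℕ} {T : Finset ℕ} (hca : c ≤ a) (hak : a ≤ k)
    (hT : ∀ x ∈ T, a < x) : Ico c k \ insert a T = Ico c a ∪ (Ico (a + 1) k \ T) := by
  ext x
  by_cases hxT : x ∈ T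
  · have := hT x hxT
    simp only [mem_sdiff, mem_insert, mem_union, mem_Ico, hxT, or_true, not_true, and_false,
      or_false, false_iff]
    omega
  · simp only [mem_sdiff, mem_insert, mem_union, mem_Ico, hxT, or_false, not_false_eq_true,
      and_true]
    omega

lemma choose_sub_mul_sub_mul_factorial_mul_factorial {c a k : ℕ} (hca : c ≤ a) (hak : a < k) :
    (k - c).choose (k - a) * (k - a) * (a - c)! * (k - (a + 1))! = (k - c)! := by
  have hfact : (k - a) * (k - (a + 1))! = (k - a)! := by
    rw [← Nat.sub_sub, Nat.mul_factorial_pred (by omega)]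
  rw [← Nat.choose_mul_factorial_mul_factorial (show k - a ≤ k - c by omega), ← hfact,
    show k - c - (k - a) = a - c by omega]
  ring

theorem chainChoose_mul_runFactProd_sdiff_mul_prod {k c s : ℕ} {ℓ : ℕ → ℕ}
    (hmono : StrictMonoOn ℓ (Set.Iio s)) (hℓ : ∀ i < s, ℓ i ∈ Ico c k) :
    chainChoose (k - c) k ℓ s * runFactProd (Ico c k \ (range s).image ℓ)
      * ∏ i ∈ range s, (k - ℓ i) = (k - c)! := by
  induction s generalizing c ℓ with
  | zero => simp [chainChoose, runFactProd_Ico]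
  | succ s ih =>
    set a := ℓ 0
    set T := (range s).image (fun i => ℓ (i + 1))
    have ha : c ≤ a ∧ a < k := mem_Ico.1 (hℓ 0 s.succ_pos)
    have hT : ∀ x ∈ T, a < x := by
      simp only [T, mem_image, mem_range]
      rintro _ ⟨i, hi, rfl⟩
      exact hmono (by simp) (by simp [hi]) i.succ_pos
    have himage : (range (s + 1)).image ℓ = insert a T := by
      rw [range_add_one', image_insert, map_eq_image, image_image]
      rfl
    have hRF : runFactProd (Ico c k \ insert a T)
        = (a - c)! * runFactProd (Ico (a + 1) k \ T) := by
      rw [Ico_sdiff_insert ha.1 ha.2.le hT, runFactProd_union, runFactProd_Ico]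
      intro x hx y hy
      have := mem_Ico.1 hx
      have := mem_Ico.1 (mem_sdiff.1 hy).1
      omega
    have ih' := ih (c := a + 1) (ℓ := fun i => ℓ (i + 1))
      (fun i hi j hj hij => hmono (by simpa using hi) (by simpa using hj) (by omega))
      (fun i hi => mem_Ico.2 ⟨hT _ (mem_image_of_mem _ (mem_range.2 hi)),
        (mem_Ico.1 (hℓ (i + 1) (by omega))).2⟩)
    rw [chainChoose_succ, himage, hRF, prod_range_succ']
    calc (k - c).choose (k - a) * chainChoose (k - (a + 1)) k (fun i => ℓ (i + 1)) s
          * ((a - c)! * runFactProd (Ico (a + 1) k \ T))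
          * ((∏ i ∈ range s, (k - ℓ (i + 1))) * (k - a))
        = (k - c).choose (k - a) * (k - a) * (a - c)! * (k - (a + 1))! := by
          rw [← ih']; ring
      _ = (k - c)! := choose_sub_mul_sub_mul_factorial_mul_factorial ha.1 ha.2

lemma chainChoose_mul_runFactProd_compl_mul_prod {k s : ℕ} {L : Finset ℕ} {ℓ : ℕ → ℕ}
    (hmono : StrictMonoOn ℓ (Set.Iio s)) (himage : (range s).image ℓ = L) (hL : L ⊆ range k) :
    chainChoose k k ℓ s * runFactProd (range k \ L) * ∏ i ∈ range s, (k - ℓ i) = k ! := by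
  have h := chainChoose_mul_runFactProd_sdiff_mul_prod (c := 0) (k := k) hmono fun i hi => by
    simpa using hL (himage ▸ mem_image_of_mem ℓ (mem_range.2 hi))
  rwa [← range_eq_Ico, Nat.sub_zero, himage] at h

lemma image_range_eq_of_strictMonoOn {α : Type*} [Preorder α] [DecidableEq α] {A : Finset α}
    {n : ℕ} {f : ℕ → α} (hf : StrictMonoOn f (Set.Iio n)) (hmem : ∀ i < n, f i ∈ A)
    (hcard : A.card = n) : (range n).image f = A :=
  eq_of_subset_of_card_le (image_subset_iff.2 fun i hi => hmem i (mem_range.1 hi)) <| by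
    rw [card_image_of_injOn (by rw [coe_range]; exact hf.injOn), card_range, hcard]

lemma prod_comp_mul_prod_comp_eq_prod_range {M : Type*} [CommMonoid M] {k s t : ℕ}
    {L : Finset ℕ} {ℓ ℓ' : ℕ → ℕ} (hL : L ⊆ range k) (hℓ : Set.InjOn ℓ (Set.Iio s))
    (hℓ' : Set.InjOn ℓ' (Set.Iio t)) (himage : (range s).image ℓ = L)
    (himage' : (range t).image ℓ' = range k \ L) (g : ℕ → M) :
    (∏ i ∈ range s, g (ℓ i)) * ∏ i ∈ range t, g (ℓ' i) = ∏ a ∈ range k, g a := by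
  rw [← prod_sdiff hL, ← himage', ← himage, prod_image, prod_image, mul_comm]
  · rwa [coe_range]
  · rwa [coe_range]

lemma prod_range_sub_eq_factorial (n : ℕ) : ∏ i ∈ range n, (n - i) = n ! := by
  rw [← Nat.descFactorial_eq_prod_range, Nat.descFactorial_self]

theorem run_binomial_product_eq_one_div_factorial_general
    (k s : ℕ) (L : Finset ℕ) (hL : L ⊆ Finset.range k)
    (hs : L.card = s)
    (ℓ ℓ' : ℕ → ℕ)
    (hmono : ∀ i j, i < j → j < s → ℓ i < ℓ j)
    (hmem : ∀ i, i < s → ℓ i ∈ L)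
    (hmono' : ∀ i j, i < j → j < k - s → ℓ' i < ℓ' j)
    (hmem' : ∀ i, i < k - s → ℓ' i ∈ Finset.range k \ L) :
    ((runFactProd L : ℚ) *
        (∏ i ∈ Finset.range s,
          Nat.choose (if i = 0 then k else k - ℓ (i - 1) - 1) (k - ℓ i) : ℕ) /
        (∏ i ∈ Finset.range s, ((ℓ i + 1) * (k - ℓ i)) : ℕ)) *
      ((runFactProd (Finset.range k \ L) : ℚ) *
        (∏ i ∈ Finset.range (k - s),
          Nat.choose (if i = 0 then k else k - ℓ' (i - 1) - 1) (k - ℓ' i) : ℕ) /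
        (∏ i ∈ Finset.range (k - s), ((ℓ' i + 1) * (k - ℓ' i)) : ℕ)) =
      1 / (k.factorial : ℚ) := by
  have hmonoL : StrictMonoOn ℓ (Set.Iio s) := fun i _ j hj hij => hmono i j hij hj
  have hmonoC : StrictMonoOn ℓ' (Set.Iio (k - s)) := fun i _ j hj hij => hmono' i j hij hj
  have hLim := image_range_eq_of_strictMonoOn hmonoL hmem hs
  have hCim := image_range_eq_of_strictMonoOn hmonoC hmem' <| by
    rw [card_sdiff_of_subset hL, card_range, hs]
  have hsplit (g : ℕ → ℕ) :=
    prod_comp_mul_prod_comp_eq_prod_range hL hmonoL.injOn hmonoC.injOn hLim hCim g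
  have keyL := chainChoose_mul_runFactProd_compl_mul_prod hmonoL hLim hL
  have keyC := chainChoose_mul_runFactProd_compl_mul_prod hmonoC hCim sdiff_subset
  rw [Finset.sdiff_sdiff_eq_self hL] at keyC
  have hnum : runFactProd L * chainChoose k k ℓ s
      * (runFactProd (range k \ L) * chainChoose k k ℓ' (k - s)) = k ! := by
    refine Nat.eq_of_mul_eq_mul_right k.factorial_pos ?_
    conv_lhs => rw [← prod_range_sub_eq_factorial, ← hsplit (k - ·)]
    calc _ = (chainChoose k k ℓ s * runFactProd (range k \ L) * ∏ i ∈ range s, (k - ℓ i))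
          * (chainChoose k k ℓ' (k - s) * runFactProd L * ∏ i ∈ range (k - s), (k - ℓ' i)) := by
          ring
      _ = k ! * k ! := by rw [keyL, keyC]
  have hden : (∏ i ∈ range s, ((ℓ i + 1) * (k - ℓ i)))
      * ∏ i ∈ range (k - s), ((ℓ' i + 1) * (k - ℓ' i)) = k ! * k ! := by
    rw [prod_mul_distrib, prod_mul_distrib, mul_mul_mul_comm, hsplit (· + 1), hsplit (k - ·),
      prod_range_add_one_eq_factorial, prod_range_sub_eq_factorial]
  change ((runFactProd L : ℚ) * (chainChoose k k ℓ s : ℕ) / _)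
    * ((runFactProd (range k \ L) : ℚ) * (chainChoose k k ℓ' (k - s) : ℕ) / _) = _
  rw [div_mul_div_comm, ← Nat.cast_mul, ← Nat.cast_mul, ← Nat.cast_mul, ← Nat.cast_mul,
    hnum, hden]
  push_cast
  field_simp

theorem run_binomial_product_eq_one_div_factorial
    (k s : ℕ) (hk : 0 < k) (L : Finset ℕ) (hL : L ⊆ Finset.range k)
    (hs : L.card = s)
    (ℓ ℓ' : ℕ → ℕ)
    (hmono : ∀ i j, i < j → j < s → ℓ i < ℓ j)
    (hmem : ∀ i, i < s → ℓ i ∈ L)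
    (hmono' : ∀ i j, i < j → j < k - s → ℓ' i < ℓ' j)
    (hmem' : ∀ i, i < k - s → ℓ' i ∈ Finset.range k \ L) :
    ((runFactProd L : ℚ) *
        (∏ i ∈ Finset.range s,
          Nat.choose (if i = 0 then k else k - ℓ (i - 1) - 1) (k - ℓ i) : ℕ) /
        (∏ i ∈ Finset.range s, ((ℓ i + 1) * (k - ℓ i)) : ℕ)) *
      ((runFactProd (Finset.range k \ L) : ℚ) *
        (∏ i ∈ Finset.range (k - s),
          Nat.choose (if i = 0 then k else k - ℓ' (i - 1) - 1) (k - ℓ' i) : ℕ) /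
        (∏ i ∈ Finset.range (k - s), ((ℓ' i + 1) * (k - ℓ' i)) : ℕ)) =
      1 / (k.factorial : ℚ) :=
  run_binomial_product_eq_one_div_factorial_general k s L hL hs ℓ ℓ' hmono hmem hmono' hmem'
end

section
/- Fix integers k > ℓ ≥ 0 and ℓ < u ≤ k. Define for integers n ≥ 2k+u the quantity P(n) = ∑_{j=0}^{k-ℓ} (-1)^j C(u,j) C(k-u, k-ℓ-j) C(n-k-u, k-ℓ-j). Then P(n) / n^{k-u} converges to (-1)^{u-ℓ} C(u,ℓ) / (k-u)! as n → ∞. -/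
/-!
Only the index `j = u - ℓ` contributes to the limit. For `j < u - ℓ` the factor
`C(k - u, k - ℓ - j)` vanishes; for `j > u - ℓ` the polynomial `C(n - k - u, k - ℓ - j)` has degree
`k - ℓ - j < k - u` in `n`; and for `j = u - ℓ` it is `C(n - k - u, k - u) ~ n ^ (k - u) / (k - u)!`.
-/

open Filter Topology Asymptotics Nat

theorem tendsto_choose_sub_div_pow (c m : ℕ) :
    Tendsto (fun n : ℕ => ((n - c).choose m : ℝ) / (n : ℝ) ^ m) atTop (𝓝 (1 / m !)) := by
  rw [← tendsto_add_atTop_iff_nat c]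
  simp only [Nat.add_sub_cancel, Nat.cast_add]
  have hequiv : (fun n : ℕ => (n.choose m : ℝ) / ((n : ℝ) + c) ^ m) ~[atTop]
      fun n : ℕ => (n : ℝ) ^ m / m ! / ((n : ℝ) + c) ^ m :=
    (isEquivalent_choose m).div IsEquivalent.refl
  refine hequiv.symm.tendsto_nhds ?_
  have hratio := ((tendsto_natCast_div_add_atTop (c : ℝ)).pow m).div_const (m ! : ℝ)
  rw [one_pow] at hratio
  refine hratio.congr fun n => ?_
  rw [div_pow]
  ring

theorem tendsto_choose_sub_div_pow_of_lt (c : ℕ) {m d : ℕ} (h : m < d) :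
    Tendsto (fun n : ℕ => ((n - c).choose m : ℝ) / (n : ℝ) ^ d) atTop (𝓝 0) := by
  have hsplit : ∀ n : ℕ, ((n - c).choose m : ℝ) / (n : ℝ) ^ d =
      ((n - c).choose m : ℝ) / (n : ℝ) ^ m / (n : ℝ) ^ (d - m) := fun n => by
    rw [div_div, ← pow_add, Nat.add_sub_cancel' h.le]
  simp only [hsplit]
  exact (tendsto_choose_sub_div_pow c m).div_atTop
    ((tendsto_pow_atTop (Nat.sub_ne_zero_of_lt h)).comp tendsto_natCast_atTop_atTop)

theorem tendsto_choose_mul_choose_sub_div_pow (c m d : ℕ) :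
    Tendsto (fun n : ℕ => (d.choose m : ℝ) * (n - c).choose m / (n : ℝ) ^ d) atTop
      (𝓝 (if m = d then 1 / d ! else 0)) := by
  rcases lt_trichotomy m d with hlt | rfl | hgt
  · simpa only [mul_div_assoc, hlt.ne, if_false, mul_zero] using
      (tendsto_choose_sub_div_pow_of_lt c hlt).const_mul (d.choose m : ℝ)
  · simpa only [Nat.choose_self, Nat.cast_one, one_mul, if_true] using
      tendsto_choose_sub_div_pow c m
  · simpa only [Nat.choose_eq_zero_of_lt hgt, hgt.ne', Nat.cast_zero, zero_mul, zero_div,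
      if_false] using tendsto_const_nhds

theorem eigen_sum_asymptotics_large_u_general (k ℓ u : ℕ)
    (hu : ℓ < u) (huk : u ≤ k) :
    Tendsto
      (fun n : ℕ =>
        (∑ j ∈ Finset.range (k - ℓ + 1),
            (-1 : ℚ) ^ j * (u.choose j) * ((k - u).choose (k - ℓ - j)) *
              ((n - k - u).choose (k - ℓ - j))) /
          (n : ℚ) ^ (k - u))
      atTop
      (nhds ((-1 : ℚ) ^ (u - ℓ) * (u.choose ℓ : ℚ) / (k - u).factorial)) := by
  -- Mathlib's asymptotics of `Nat.choose` live over `ℝ`.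
  rw [Rat.isEmbedding_coe_real.tendsto_nhds_iff]
  have hterms := tendsto_finsetSum (Finset.range (k - ℓ + 1)) fun j _ =>
    (tendsto_choose_mul_choose_sub_div_pow (k + u) (k - ℓ - j) (k - u)).const_mul
      ((-1 : ℝ) ^ j * u.choose j)
  have hlimit : ∑ j ∈ Finset.range (k - ℓ + 1), (-1 : ℝ) ^ j * u.choose j *
      (if k - ℓ - j = k - u then (1 / (k - u)! : ℝ) else 0) =
      (-1 : ℝ) ^ (u - ℓ) * u.choose ℓ / (k - u)! := by
    rw [Finset.sum_eq_single_of_mem (u - ℓ) (by simp only [Finset.mem_range]; omega)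
      fun j hj hne => by rw [if_neg (by grind), mul_zero],
      if_pos (by omega), Nat.choose_symm hu.le]
    ring
  rw [hlimit] at hterms
  push_cast
  refine hterms.congr fun n => ?_
  rw [Function.comp_apply, Nat.sub_sub n k u]
  push_cast
  rw [Finset.sum_div]
  exact Finset.sum_congr rfl fun j _ => by ring

theorem eigen_sum_asymptotics_large_u (k ℓ u : ℕ) (hℓk : ℓ < k)
    (hu : ℓ < u) (huk : u ≤ k) :
    Tendsto
      (fun n : ℕ =>
        (∑ j ∈ Finset.range (k - ℓ + 1),
            (-1 : ℚ) ^ j * (u.choose j) * ((k - u).choose (k - ℓ - j)) *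
              ((n - k - u).choose (k - ℓ - j))) /
          (n : ℚ) ^ (k - u))
      atTop
      (nhds ((-1 : ℚ) ^ (u - ℓ) * (u.choose ℓ : ℚ) / (k - u).factorial)) :=
  eigen_sum_asymptotics_large_u_general k ℓ u hu huk
end

section
/- Let G be a finite graph on n vertices and F a field. Then minrank_F(G) · minrank_F(G^c) ≥ n, where G^c is the complement graph. -/
/-!
Let `M` and `N` attain the minranks of `G` and `Gᶜ`. Every off-diagonal position is a non-edge of
`G` or of `Gᶜ`, so the Hadamard product `M ⊙ N` is diagonal with nonzero diagonal: it has rank `n`.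
Column `j` of `M ⊙ N` is the pointwise product of column `j` of `M` and of `N`, so the column
space of `M ⊙ N` lies in the product of the two column spaces, which is the image of their
tensor product; hence `rank (M ⊙ N) ≤ rank M * rank N`.
-/

/-- The minrank of a graph `G` on `n` vertices over a field `F`: the minimum
rank of an `n × n` matrix over `F` with nonzero diagonal entries and zero
entries at all off-diagonal non-edges. -/
noncomputable def minrank (F : Type*) [Field F] {n : ℕ} (G : SimpleGraph (Fin n)) : ℕ :=
  sInf {r | ∃ M : Matrix (Fin n) (Fin n) F,
    (∀ i, M i i ≠ 0) ∧ (∀ i j, i ≠ j → ¬G.Adj i j → M i j = 0) ∧ M.rank = r}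

open Matrix Module Submodule

theorem Submodule.finrank_mul_le {F S : Type*} [Field F] [Ring S] [Algebra F S]
    (P Q : Submodule F S) [FiniteDimensional F P] [FiniteDimensional F Q] :
    finrank F ↥(P * Q) ≤ finrank F P * finrank F Q := by
  rw [← mulMap_range, ← finrank_tensorProduct]
  exact LinearMap.finrank_range_le _

theorem Matrix.rank_hadamard_le {F m n : Type*} [Field F] [Fintype n] (A B : Matrix m n F) :
    (A ⊙ B).rank ≤ A.rank * B.rank := by
  simp only [rank_eq_finrank_span_cols]
  set P := span F (Set.range Aᵀ)
  set Q := span F (Set.range Bᵀ)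
  have : FiniteDimensional F P := FiniteDimensional.span_of_finite F (Set.finite_range _)
  have : FiniteDimensional F Q := FiniteDimensional.span_of_finite F (Set.finite_range _)
  have : FiniteDimensional F ↥(P * Q) := mulMap_range P Q ▸ inferInstance
  calc finrank F ↥(span F (Set.range (A ⊙ B)ᵀ)) ≤ finrank F ↥(P * Q) := by
        refine Submodule.finrank_mono (span_le.2 ?_)
        rintro _ ⟨j, rfl⟩
        exact mul_mem_mul (subset_span ⟨j, rfl⟩) (subset_span ⟨j, rfl⟩)
    _ ≤ finrank F P * finrank F Q := P.finrank_mul_le Q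

theorem Matrix.rank_diagonal_of_forall_ne_zero {F m : Type*} [Field F] [Fintype m] [DecidableEq m]
    {w : m → F} (hw : ∀ i, w i ≠ 0) : (diagonal w).rank = Fintype.card m := by
  classical
  rw [rank_diagonal]
  simp only [ne_eq, hw, not_false_eq_true, Fintype.card_subtype_true]

theorem SimpleGraph.hadamard_eq_diagonal_of_compl {V R : Type*} [MulZeroClass R] [DecidableEq V]
    (G : SimpleGraph V) {M N : Matrix V V R}
    (hM : ∀ i j, i ≠ j → ¬G.Adj i j → M i j = 0) (hN : ∀ i j, i ≠ j → ¬Gᶜ.Adj i j → N i j = 0) :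
    M ⊙ N = diagonal fun i => M i i * N i i := by
  ext i j
  rcases eq_or_ne i j with rfl | hij
  · simp
  rw [hadamard_apply, diagonal_apply_ne _ hij]
  by_cases hadj : G.Adj i j
  · rw [hN i j hij (by simp [hadj]), mul_zero]
  · rw [hM i j hij hadj, zero_mul]

theorem exists_rank_eq_minrank (F : Type*) [Field F] {n : ℕ} (G : SimpleGraph (Fin n)) :
    ∃ M : Matrix (Fin n) (Fin n) F,
      (∀ i, M i i ≠ 0) ∧ (∀ i j, i ≠ j → ¬G.Adj i j → M i j = 0) ∧ M.rank = minrank F G :=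
  Nat.sInf_mem (s := {r | ∃ M : Matrix (Fin n) (Fin n) F,
      (∀ i, M i i ≠ 0) ∧ (∀ i j, i ≠ j → ¬G.Adj i j → M i j = 0) ∧ M.rank = r})
    ⟨_, 1, fun i => by simp, fun _ _ hij _ => one_apply_ne hij, rfl⟩

theorem minrank_mul_minrank_compl_ge (F : Type*) [Field F] (n : ℕ)
    (G : SimpleGraph (Fin n)) :
    n ≤ minrank F G * minrank F Gᶜ := by
  obtain ⟨M, hMd, hMo, hMr⟩ := exists_rank_eq_minrank F G
  obtain ⟨N, hNd, hNo, hNr⟩ := exists_rank_eq_minrank F Gᶜ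
  calc n = (M ⊙ N).rank := by
        rw [G.hadamard_eq_diagonal_of_compl hMo hNo,
          rank_diagonal_of_forall_ne_zero fun i => mul_ne_zero (hMd i) (hNd i), Fintype.card_fin]
    _ ≤ M.rank * N.rank := rank_hadamard_le M N
    _ = minrank F G * minrank F Gᶜ := by rw [hMr, hNr]
end

section
/- Let q be a prime power, k a positive integer with q ≤ k+1, and let F be a family of k-element subsets of {1,...,n} such that for all distinct A, B ∈ F, |A ∩ B| is not congruent to k modulo q. Then |F| ≤ C(n, q-1). -/
/-!
Wilson's inclusion-matrix argument. Put `m = (q - 1)(k + 1)`, so that `m + k + 1 ≡ 0 (mod q)`,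
and let `M` be the `F × F` matrix with entries `C(|A ∩ B| + m, q - 1)`. By Lucas' theorem
`C(t, q - 1)` is nonzero mod `p` exactly when `q ∣ t + 1`, i.e. here when `|A ∩ B| ≡ k (mod q)`;
so `M` is diagonal and invertible mod `p`, hence nonsingular over `ℚ`. On the other hand
Vandermonde's identity writes `M` as `∑ j, C(m, q - 1 - j) W_j W_jᵀ`, with `W_j` the inclusion
matrix of `F` against the `j`-subsets, and since the members of `F` have `k ≥ q - 1` elements
every `W_j` factors through `W_(q-1)`. Thus `|F| = rank M ≤ rank W_(q-1) ≤ C(n, q - 1)`.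
-/

open Finset Matrix

theorem Nat.dvd_add_one_iff_mod_eq {p t : ℕ} (hp : 0 < p) : p ∣ t + 1 ↔ t % p = p - 1 := by
  constructor
  · rintro ⟨c, hc⟩
    have ht : t = p - 1 + p * (c - 1) := by
      rcases c with _ | c
      · omega
      · rw [Nat.mul_succ] at hc; rw [Nat.add_sub_cancel]; omega
    rw [ht, Nat.add_mul_mod_self_left, Nat.mod_eq_of_lt (by omega)]
  · intro h
    exact ⟨t / p + 1, by have := Nat.div_add_mod t p; rw [Nat.mul_succ]; omega⟩

theorem Nat.mul_dvd_add_one_iff {p q t : ℕ} (hp : 0 < p) :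
    p * q ∣ t + 1 ↔ p ∣ t + 1 ∧ q ∣ t / p + 1 := by
  have hcarry : p ∣ t + 1 → t + 1 = p * (t / p + 1) := fun h => by
    have := Nat.div_add_mod t p
    rw [Nat.dvd_add_one_iff_mod_eq hp] at h
    rw [Nat.mul_succ]; omega
  constructor
  · intro h
    have hp_dvd := dvd_of_mul_right_dvd h
    rw [hcarry hp_dvd] at h
    exact ⟨hp_dvd, Nat.dvd_of_mul_dvd_mul_left hp h⟩
  · rintro ⟨hp_dvd, hq_dvd⟩
    rw [hcarry hp_dvd]
    exact mul_dvd_mul_left p hq_dvd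

theorem Nat.choose_pred_prime_ne_zero_iff {p r : ℕ} [Fact p.Prime] (hr : r < p) :
    (r.choose (p - 1) : ZMod p) ≠ 0 ↔ r = p - 1 := by
  rcases eq_or_ne r (p - 1) with rfl | h
  · simp
  · simp [Nat.choose_eq_zero_of_lt (by omega : r < p - 1), h]

theorem Nat.dvd_add_add_one_iff_modEq {q m k : ℕ} (hm : q ∣ m + k + 1) (x : ℕ) :
    q ∣ x + m + 1 ↔ x ≡ k [MOD q] := by
  rw [← ZMod.natCast_eq_zero_iff] at hm ⊢
  rw [← ZMod.natCast_eq_natCast_iff]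
  push_cast at hm ⊢
  constructor <;> intro h
  · linear_combination h - hm
  · linear_combination h + hm

theorem Nat.choose_pred_prime_pow_ne_zero_iff {p : ℕ} [hp : Fact p.Prime] (e t : ℕ) :
    (t.choose (p ^ e - 1) : ZMod p) ≠ 0 ↔ p ^ e ∣ t + 1 := by
  have hp0 := hp.out.pos
  induction e generalizing t with
  | zero => simp
  | succ e ih =>
    have hpe : 0 < p ^ e := pow_pos hp0 e
    have hdigits : p ^ (e + 1) - 1 = (p - 1) + p * (p ^ e - 1) := by
      rw [pow_succ', Nat.mul_sub, mul_one]; have := Nat.le_mul_of_pos_right p hpe; omega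
    have hmod : (p ^ (e + 1) - 1) % p = p - 1 := by
      rw [hdigits, Nat.add_mul_mod_self_left, Nat.mod_eq_of_lt (by omega)]
    have hdiv : (p ^ (e + 1) - 1) / p = p ^ e - 1 := by
      rw [hdigits, Nat.add_mul_div_left _ _ hp0, Nat.div_eq_of_lt (by omega), zero_add]
    have hlucas := (Choose.choose_modEq_choose_mod_mul_choose_div_nat (p := p)
      (n := t) (k := p ^ (e + 1) - 1))
    rw [hmod, hdiv, ← ZMod.natCast_eq_natCast_iff] at hlucas
    rw [hlucas, Nat.cast_mul, mul_ne_zero_iff]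
    refine (and_congr (Nat.choose_pred_prime_ne_zero_iff (Nat.mod_lt _ hp0)) (ih _)).trans ?_
    rw [← Nat.dvd_add_one_iff_mod_eq hp0, pow_succ', Nat.mul_dvd_add_one_iff hp0]

section InclusionMatrix

variable {α : Type*} [Fintype α] [DecidableEq α] (R : Type*)

theorem Finset.filter_powersetCard_univ_subset (s : Finset α) (j : ℕ) :
    {t ∈ powersetCard j (univ : Finset α) | t ⊆ s} = powersetCard j s := by
  ext t
  simp [and_comm]

def inclusionMatrix [Zero R] [One R] (𝒜 : Finset (Finset α)) (j : ℕ) :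
    Matrix 𝒜 (powersetCard j (univ : Finset α)) R :=
  of fun A S => if S.1 ⊆ A.1 then 1 else 0

variable {R} [NonAssocSemiring R]

theorem inclusionMatrix_mul_transpose_apply (𝒜 : Finset (Finset α)) (j : ℕ) (A B : 𝒜) :
    (inclusionMatrix R 𝒜 j * (inclusionMatrix R 𝒜 j)ᵀ) A B = (#(A.1 ∩ B.1)).choose j := by
  simp only [mul_apply, transpose_apply, inclusionMatrix, of_apply, mul_ite, mul_one, mul_zero,
    ← ite_and, and_comm (a := _ ⊆ B.1), ← subset_inter_iff, sum_coe_sort _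
      (fun S => if S ⊆ A.1 ∩ B.1 then (1 : R) else 0), sum_boole,
    filter_powersetCard_univ_subset, card_powersetCard]

-- Without the ascription `(univ : Finset α)` the product elaborates as `CStarMatrix` multiplication.
theorem inclusionMatrix_mul_inclusionMatrix {𝒜 : Finset (Finset α)} {k : ℕ}
    (h𝒜 : ∀ A ∈ 𝒜, #A = k) {j d : ℕ} (hjd : j ≤ d) :
    inclusionMatrix R 𝒜 d * inclusionMatrix R (powersetCard d (univ : Finset α)) j
      = ((k - j).choose (d - j) : R) • inclusionMatrix R 𝒜 j := by
  ext A S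
  have hS : #S.1 = j := (mem_powersetCard.mp S.2).2
  simp only [mul_apply, Matrix.smul_apply, inclusionMatrix, of_apply, mul_ite, mul_one, mul_zero,
    ← ite_and, smul_eq_mul, and_comm (a := S.1 ⊆ _), sum_coe_sort _
      (fun T => if T ⊆ A.1 ∧ S.1 ⊆ T then (1 : R) else 0), sum_boole, ← filter_filter,
    filter_powersetCard_univ_subset]
  split_ifs with hSA
  · rw [card_filter_powersetCard_subset _ _ _ hSA (hS.trans_le hjd), h𝒜 A.1 A.2, hS]
  · rw [filter_false_of_mem fun T hT hST => hSA (hST.trans (mem_powersetCard.mp hT).1)]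
    simp

theorem of_choose_card_inter_add_eq_sum (𝒜 : Finset (Finset α)) (m d : ℕ) :
    (of fun A B : 𝒜 => ((#(A.1 ∩ B.1) + m).choose d : R)) =
      ∑ j ∈ range (d + 1),
        (m.choose (d - j) : R) • (inclusionMatrix R 𝒜 j * (inclusionMatrix R 𝒜 j)ᵀ) := by
  ext A B
  simp only [of_apply, Matrix.sum_apply, Matrix.smul_apply, inclusionMatrix_mul_transpose_apply,
    Nat.add_choose_eq, Finset.Nat.sum_antidiagonal_eq_sum_range_succ
      (fun i j => (#(A.1 ∩ B.1)).choose i * m.choose j), smul_eq_mul]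
  push_cast
  exact sum_congr rfl fun _ _ => Nat.cast_comm _ _

variable {K : Type*} [Field K] [CharZero K]

theorem inclusionMatrix_eq_mul {𝒜 : Finset (Finset α)} {k : ℕ} (h𝒜 : ∀ A ∈ 𝒜, #A = k)
    {j d : ℕ} (hjd : j ≤ d) (hdk : d ≤ k) :
    inclusionMatrix K 𝒜 j = inclusionMatrix K 𝒜 d *
      (((k - j).choose (d - j) : K)⁻¹ • inclusionMatrix K (powersetCard d (univ : Finset α)) j) := by
  have hc : ((k - j).choose (d - j) : K) ≠ 0 := Nat.cast_ne_zero.2 (Nat.choose_pos (by omega)).ne'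
  rw [Matrix.mul_smul, inclusionMatrix_mul_inclusionMatrix h𝒜 hjd, smul_smul, inv_mul_cancel₀ hc,
    one_smul]

theorem rank_of_choose_card_inter_add_le {𝒜 : Finset (Finset α)} {k d : ℕ}
    (h𝒜 : ∀ A ∈ 𝒜, #A = k) (hdk : d ≤ k) (m : ℕ) :
    (of fun A B : 𝒜 => ((#(A.1 ∩ B.1) + m).choose d : K)).rank ≤ (Fintype.card α).choose d := by
  have hfactor : (of fun A B : 𝒜 => ((#(A.1 ∩ B.1) + m).choose d : K)) =
      inclusionMatrix K 𝒜 d * ∑ j ∈ range (d + 1), (m.choose (d - j) : K) •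
        ((((k - j).choose (d - j) : K)⁻¹ • inclusionMatrix K (powersetCard d (univ : Finset α)) j) *
          (inclusionMatrix K 𝒜 j)ᵀ) := by
    rw [of_choose_card_inter_add_eq_sum, Matrix.mul_sum]
    refine sum_congr rfl fun j hj => ?_
    rw [Matrix.mul_smul, ← Matrix.mul_assoc,
      ← inclusionMatrix_eq_mul h𝒜 (Nat.lt_succ_iff.mp (mem_range.mp hj)) hdk]
  calc _ ≤ (inclusionMatrix K 𝒜 d).rank := hfactor ▸ rank_mul_le_left _ _
    _ ≤ _ := rank_le_card_width _
    _ = _ := by simp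

end InclusionMatrix

theorem Matrix.det_map_natCast_ne_zero {ι : Type*} [Fintype ι] [DecidableEq ι] {R S : Type*}
    [CommRing R] [CommRing S] [CharZero S] {M : Matrix ι ι ℕ}
    (h : (M.map ((↑) : ℕ → R)).det ≠ 0) : (M.map ((↑) : ℕ → S)).det ≠ 0 := by
  have hR : M.map ((↑) : ℕ → R) = (M.map ((↑) : ℕ → ℤ)).map (↑) := by ext; simp
  have hS : M.map ((↑) : ℕ → S) = (M.map ((↑) : ℕ → ℤ)).map (↑) := by ext; simp
  rw [hR, ← Int.cast_det] at h
  rw [hS, ← Int.cast_det]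
  exact Int.cast_ne_zero.2 fun h0 => h (by rw [h0, Int.cast_zero])

theorem frankl_wilson_general (n k q : ℕ) (hq : q ≤ k + 1)
    (hqpp : ∃ p m : ℕ, p.Prime ∧ 0 < m ∧ q = p ^ m)
    (F : Finset (Finset (Fin n)))
    (hcard : ∀ A ∈ F, A.card = k)
    (hint : ∀ A ∈ F, ∀ B ∈ F, A ≠ B → ¬((A ∩ B).card ≡ k [MOD q])) :
    F.card ≤ n.choose (q - 1) := by
  obtain ⟨p, e, hp, -, rfl⟩ := hqpp
  have : Fact p.Prime := ⟨hp⟩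
  have hm : p ^ e ∣ (p ^ e - 1) * (k + 1) + k + 1 :=
    ⟨k + 1, by zify [Nat.one_le_pow e p hp.pos]; ring⟩
  set m := (p ^ e - 1) * (k + 1)
  have hentry (x : ℕ) : ((x + m).choose (p ^ e - 1) : ZMod p) ≠ 0 ↔ x ≡ k [MOD p ^ e] := by
    rw [Nat.choose_pred_prime_pow_ne_zero_iff, Nat.dvd_add_add_one_iff_modEq hm]
  let M : Matrix F F ℕ := of fun A B => (#(A.1 ∩ B.1) + m).choose (p ^ e - 1)
  have hdiag : M.map ((↑) : ℕ → ZMod p) =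
      diagonal fun _ => ((k + m).choose (p ^ e - 1) : ZMod p) := by
    ext A B
    rcases eq_or_ne A B with rfl | hAB
    · simp [M, hcard A.1 A.2]
    · simpa [M, hAB] using mt (hentry _).1 (hint A.1 A.2 B.1 B.2 (Subtype.coe_ne_coe.2 hAB))
  have hdet : (M.map ((↑) : ℕ → ℚ)).det ≠ 0 := Matrix.det_map_natCast_ne_zero (R := ZMod p) <| by
    rw [hdiag, det_diagonal]
    exact prod_ne_zero_iff.2 fun _ _ => (hentry k).2 rfl
  calc #F = (M.map ((↑) : ℕ → ℚ)).rank := by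
        rw [rank_of_isUnit _ ((isUnit_iff_isUnit_det _).2 hdet.isUnit), Fintype.card_coe]
    _ ≤ (Fintype.card (Fin n)).choose (p ^ e - 1) :=
        rank_of_choose_card_inter_add_le hcard (by omega) m
    _ = n.choose (p ^ e - 1) := by rw [Fintype.card_fin]

/-- Frankl–Wilson: if `q` is a prime power, `q ≤ k + 1`, and `F` is a family of
`k`-subsets of `{1,...,n}` with `|A ∩ B| ≢ k (mod q)` for all distinct `A, B ∈ F`,
then `|F| ≤ C(n, q-1)`. -/
theorem frankl_wilson (n k q : ℕ) (hk : 0 < k) (hq : q ≤ k + 1)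
    (hqpp : ∃ p m : ℕ, p.Prime ∧ 0 < m ∧ q = p ^ m)
    (F : Finset (Finset (Fin n)))
    (hcard : ∀ A ∈ F, A.card = k)
    (hint : ∀ A ∈ F, ∀ B ∈ F, A ≠ B → ¬((A ∩ B).card ≡ k [MOD q])) :
    F.card ≤ n.choose (q - 1) :=
  frankl_wilson_general n k q hq hqpp F hcard hint
end

section
/- Let n ≥ k ≥ 1 and L ⊆ {0,...,k-1}. If F is a family of k-element subsets of {1,...,n} with |A ∩ B| ∈ L for all distinct A, B ∈ F, then |F| ≤ C(n, |L|). -/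
/-!
View `Finset α` as the cube `{0,1}^α`: `subsetIndicator I` is the monomial `x_I`, so
`lowDegree α R d` is the space of multilinear polynomials of degree `≤ d`, of dimension at most
`∑_{i ≤ d} C(n, i)`. With `s = |L|`, the polynomial `f_A(S) = ∏_{l ∈ L} (|A ∩ S| - l)` has degree
`≤ s`, vanishes at every member of `F` other than `A` and not at `A` (as `l < k`). Adding the
polynomials `(|S| - k) x_I` for `|I| < s`, which vanish on `k`-sets, gives a family that is
triangular for evaluation at the points `A` and `I`, hence linearly independent, so
`|F| + ∑_{i < s} C(n, i) ≤ ∑_{i ≤ s} C(n, i)`.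
-/

open Finset

theorem linearIndependent_of_eval_triangular {ι X R : Type*} [Fintype ι] [Ring R]
    [NoZeroDivisors R] (v : ι → X → R) (p : ι → X) (r : ι → ℕ)
    (hdiag : ∀ i, v i (p i) ≠ 0) (hlower : ∀ i j, j ≠ i → v j (p i) ≠ 0 → r j < r i) :
    LinearIndependent R v := by
  rw [Fintype.linearIndependent_iff]
  intro c hc i
  induction hri : r i using Nat.strong_induction_on generalizing i with
  | _ t ih =>
  have heval : ∑ j, c j * v j (p i) = 0 := by simpa using congrFun hc (p i)
  rw [Finset.sum_eq_single i (fun j _ hji => ?_) (by simp)] at heval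
  · exact (mul_eq_zero.mp heval).resolve_right (hdiag i)
  · by_cases h : v j (p i) = 0
    · simp [h]
    · simp [ih _ (hri ▸ hlower i j hji h) j rfl]

theorem Fintype.card_finset_le_eq_card_finset_lt_add_choose (α : Type*) [Fintype α] (s : ℕ) :
    Fintype.card {I : Finset α // #I ≤ s} =
      Fintype.card {I : Finset α // #I < s} + (Fintype.card α).choose s := by
  classical
  simp only [Fintype.card_subtype]
  rw [← card_filter_add_card_filter_not (fun I : Finset α => #I < s), filter_filter,
    filter_filter, ← card_univ, ← card_powersetCard, ← univ_filter_card_eq]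
  congr 2 <;> ext I <;> simp only [mem_filter, mem_univ, true_and] <;> omega

namespace RayChaudhuriWilson

variable {α R : Type*} [DecidableEq α] [CommRing R]

def subsetIndicator (I : Finset α) : Finset α → R := fun S => if I ⊆ S then 1 else 0

variable (α R) in
def lowDegree (d : ℕ) : Submodule R (Finset α → R) :=
  Submodule.span R (Set.range fun I : {I : Finset α // #I ≤ d} => subsetIndicator I.1)

theorem subsetIndicator_mem_lowDegree {I : Finset α} {d : ℕ} (h : #I ≤ d) :
    (subsetIndicator I : Finset α → R) ∈ lowDegree α R d :=
  Submodule.subset_span ⟨⟨I, h⟩, rfl⟩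

theorem finrank_lowDegree_le [Fintype α] [StrongRankCondition R] (d : ℕ) :
    Module.finrank R (lowDegree α R d) ≤ Fintype.card {I : Finset α // #I ≤ d} :=
  finrank_range_le_card _

theorem card_inter_mul_subsetIndicator (A I S : Finset α) :
    (#(A ∩ S) : R) * subsetIndicator I S = ∑ i ∈ A, subsetIndicator (insert i I) S := by
  by_cases hIS : I ⊆ S
  · simp [subsetIndicator, hIS, insert_subset_iff]
  · have : ∀ i, ¬ insert i I ⊆ S := fun i h => hIS ((subset_insert i I).trans h)
    simp [subsetIndicator, hIS, this]

theorem card_inter_sub_mul_mem_lowDegree (A : Finset α) (c : R) {d : ℕ}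
    {h : Finset α → R} (hh : h ∈ lowDegree α R d) :
    (fun S => ((#(A ∩ S) : R) - c) * h S) ∈ lowDegree α R (d + 1) := by
  let w : Finset α → R := fun S => (#(A ∩ S) : R) - c
  suffices lowDegree α R d ≤ (lowDegree α R (d + 1)).comap (LinearMap.mulLeft R w) from this hh
  refine Submodule.span_le.mpr ?_
  rintro - ⟨⟨I, hI⟩, rfl⟩
  have hw : w * subsetIndicator I =
      ∑ i ∈ A, subsetIndicator (insert i I) - c • subsetIndicator I := by
    funext S
    simp [w, sub_mul, card_inter_mul_subsetIndicator]
  change w * subsetIndicator I ∈ lowDegree α R (d + 1)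
  rw [hw]
  refine sub_mem (sum_mem fun i _ => subsetIndicator_mem_lowDegree ?_)
    (Submodule.smul_mem _ _ (subsetIndicator_mem_lowDegree (by omega)))
  exact (card_insert_le i I).trans (by omega)

def intersectionPoly (L : Finset ℕ) (A : Finset α) : Finset α → R :=
  fun S => ∏ l ∈ L, ((#(A ∩ S) : R) - l)

theorem intersectionPoly_mem_lowDegree (L : Finset ℕ) (A : Finset α) :
    (intersectionPoly L A : Finset α → R) ∈ lowDegree α R #L := by
  induction L using Finset.cons_induction with
  | empty =>
    have h1 : (intersectionPoly ∅ A : Finset α → R) = subsetIndicator ∅ :=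
      funext fun S => by simp [intersectionPoly, subsetIndicator]
    rw [h1]
    exact subsetIndicator_mem_lowDegree (by simp)
  | cons l L hl ih =>
    rw [card_cons]
    convert card_inter_sub_mul_mem_lowDegree A (l : R) ih using 1
    funext S
    exact prod_cons hl

theorem card_sub_mul_subsetIndicator_mem_lowDegree [Fintype α] (k : ℕ) {I : Finset α} {d : ℕ}
    (h : #I < d) : (fun S => ((#S : R) - k) * subsetIndicator I S) ∈ lowDegree α R d := by
  obtain ⟨e, rfl⟩ := Nat.exists_eq_add_of_lt h
  simpa using card_inter_sub_mul_mem_lowDegree univ (k : R)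
    (subsetIndicator_mem_lowDegree (R := R) (show #I ≤ #I + e by omega))

def polyFamily (L : Finset ℕ) (k : ℕ) (F : Finset (Finset α)) :
    F ⊕ {I : Finset α // #I < #L} → Finset α → R :=
  Sum.elim (fun A => intersectionPoly L A.1)
    (fun I S => ((#S : R) - k) * subsetIndicator I.1 S)

theorem polyFamily_mem_lowDegree [Fintype α] (L : Finset ℕ) (k : ℕ) (F : Finset (Finset α))
    (i : F ⊕ {I : Finset α // #I < #L}) : polyFamily L k F i ∈ lowDegree α R #L := by
  rcases i with A | I
  · exact intersectionPoly_mem_lowDegree L A.1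
  · exact card_sub_mul_subsetIndicator_mem_lowDegree k I.2

theorem linearIndependent_polyFamily [Fintype α] {K : Type*} [Field K] [CharZero K] {k : ℕ}
    {L : Finset ℕ} (hL : L ⊆ range k) {F : Finset (Finset α)} (hcard : ∀ A ∈ F, #A = k)
    (hint : ∀ A ∈ F, ∀ B ∈ F, A ≠ B → #(A ∩ B) ∈ L) :
    LinearIndependent K (polyFamily (R := K) L k F) := by
  have hLk : #L ≤ k := by simpa using card_le_card hL
  refine linearIndependent_of_eval_triangular _ (Sum.elim (·.1) (·.1))
    (Sum.elim (fun _ => 0) (fun I => #I.1 + 1)) ?_ ?_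
  · rintro (⟨A, hA⟩ | ⟨I, hI⟩) <;> simp only [polyFamily, Sum.elim_inl, Sum.elim_inr]
    · refine prod_ne_zero_iff.mpr fun l hl => sub_ne_zero.mpr ?_
      rw [inter_self, hcard A hA]
      exact_mod_cast (mem_range.mp (hL hl)).ne'
    · simp only [subsetIndicator, Subset.refl, if_true, mul_one, ne_eq, sub_eq_zero,
        Nat.cast_inj]
      omega
  · rintro (⟨A, hA⟩ | ⟨I, hI⟩) (⟨B, hB⟩ | ⟨J, hJ⟩) hne hnz <;>
      simp only [polyFamily, Sum.elim_inl, Sum.elim_inr, ne_eq, Sum.inl.injEq, Sum.inr.injEq,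
        reduceCtorEq, Subtype.mk.injEq] at hne hnz ⊢
    · exact absurd (prod_eq_zero (hint B hB A hA hne) (sub_self _)) hnz
    · simp [hcard A hA] at hnz
    · omega
    · have hJI : J ⊆ I := by by_contra h; simp [subsetIndicator, h] at hnz
      simpa using card_lt_card (ssubset_of_subset_of_ne hJI hne)

theorem card_le_choose_card [Fintype α] {k : ℕ} {L : Finset ℕ} (hL : L ⊆ range k)
    {F : Finset (Finset α)} (hcard : ∀ A ∈ F, #A = k)
    (hint : ∀ A ∈ F, ∀ B ∈ F, A ≠ B → #(A ∩ B) ∈ L) :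
    #F ≤ (Fintype.card α).choose #L := by
  have hspan : Submodule.span ℚ (Set.range (polyFamily L k F)) ≤ lowDegree α ℚ #L :=
    Submodule.span_le.mpr <| Set.range_subset_iff.mpr (polyFamily_mem_lowDegree L k F)
  have := calc
    #F + Fintype.card {I : Finset α // #I < #L}
        = Module.finrank ℚ (Submodule.span ℚ (Set.range (polyFamily L k F))) := by
      rw [finrank_span_eq_card (linearIndependent_polyFamily hL hcard hint), Fintype.card_sum,
        Fintype.card_coe]
    _ ≤ Module.finrank ℚ (lowDegree α ℚ #L) := Submodule.finrank_mono hspan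
    _ ≤ Fintype.card {I : Finset α // #I ≤ #L} := finrank_lowDegree_le _
    _ = Fintype.card {I : Finset α // #I < #L} + (Fintype.card α).choose #L :=
      Fintype.card_finset_le_eq_card_finset_lt_add_choose α #L
  omega

end RayChaudhuriWilson

theorem ray_chaudhuri_wilson_general (n k : ℕ)
    (L : Finset ℕ) (hL : L ⊆ Finset.range k)
    (F : Finset (Finset (Fin n)))
    (hcard : ∀ A ∈ F, A.card = k)
    (hint : ∀ A ∈ F, ∀ B ∈ F, A ≠ B → (A ∩ B).card ∈ L) :
    F.card ≤ n.choose L.card := by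
  simpa using RayChaudhuriWilson.card_le_choose_card hL hcard hint

/-- Ray-Chaudhuri–Wilson: an `L`-system of `k`-subsets of `{1,...,n}` has at
most `C(n, |L|)` members. -/
theorem ray_chaudhuri_wilson (n k : ℕ) (hk : 1 ≤ k) (hn : k ≤ n)
    (L : Finset ℕ) (hL : L ⊆ Finset.range k)
    (F : Finset (Finset (Fin n)))
    (hcard : ∀ A ∈ F, A.card = k)
    (hint : ∀ A ∈ F, ∀ B ∈ F, A ≠ B → (A ∩ B).card ∈ L) :
    F.card ≤ n.choose L.card :=
  ray_chaudhuri_wilson_general n k L hL F hcard hint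
end

section
/- Let 0 ≤ ℓ ≤ k-1 and let F be a family of k-element subsets of {1,...,n} with n > 2^k k^3 such that |A ∩ B| = ℓ for all distinct A, B ∈ F. Then |F| ≤ (n-ℓ)/(k-ℓ). -/
/-- If an `ℓ`-system of `k`-sets is large enough (or `ℓ = 0`), all its members
contain a common `ℓ`-element set. -/
lemma deza_exists_core (n : ℕ) : ∀ (ℓ k : ℕ) (F : Finset (Finset (Fin n))),
    ℓ < k → (∀ A ∈ F, A.card = k) →
    (∀ A ∈ F, ∀ B ∈ F, A ≠ B → (A ∩ B).card = ℓ) →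
    (ℓ = 0 ∨ k * 2 ^ k + 2 ≤ F.card) →
    ∃ S : Finset (Fin n), S.card = ℓ ∧ ∀ A ∈ F, S ⊆ A := by
  intro ℓ
  induction ℓ with
  | zero =>
    intro k F _ _ _ _
    exact ⟨∅, by simp, fun A _ => Finset.empty_subset A⟩
  | succ ℓ ih =>
    intro k F hℓk hcard hint hbig
    rcases hbig with h0 | hbig
    · exact absurd h0 (Nat.succ_ne_zero ℓ)
    have hk2 : 2 ≤ k := by omega
    have hF2 : 2 ≤ F.card := by
      have : 2 ≤ k * 2 ^ k + 2 := by omega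
      omega
    obtain ⟨A₀, hA₀⟩ : F.Nonempty := Finset.card_pos.mp (by omega)
    -- double counting: some x ∈ A₀ is in many members of F
    have hinter : ∀ B, A₀ ∩ B = A₀.filter (fun x => x ∈ B) := by
      intro B; ext y; simp [Finset.mem_inter, Finset.mem_filter]
    have hsum : ∑ B ∈ F, (A₀ ∩ B).card
        = ∑ x ∈ A₀, (F.filter (fun B => x ∈ B)).card := by
      simp only [hinter, Finset.card_filter]
      rw [Finset.sum_comm]
    have hsumlb : k * 2 ^ k + 1 + k ≤ ∑ B ∈ F, (A₀ ∩ B).card := by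
      rw [← Finset.sum_erase_add _ _ hA₀]
      have h1 : ∑ B ∈ F.erase A₀, (A₀ ∩ B).card
          = (F.erase A₀).card * (ℓ + 1) := by
        rw [Finset.sum_congr rfl, Finset.sum_const, smul_eq_mul]
        intro B hB
        exact hint A₀ hA₀ B (Finset.mem_of_mem_erase hB)
          (fun h => (Finset.ne_of_mem_erase hB) h.symm)
      have h2 : (A₀ ∩ A₀).card = k := by
        rw [Finset.inter_self]; exact hcard A₀ hA₀
      rw [h1, h2, Finset.card_erase_of_mem hA₀]
      have : k * 2 ^ k + 1 ≤ (F.card - 1) * (ℓ + 1) := by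
        calc k * 2 ^ k + 1 ≤ F.card - 1 := by omega
        _ ≤ (F.card - 1) * (ℓ + 1) := Nat.le_mul_of_pos_right _ (by omega)
      omega
    have hpig : ∃ x ∈ A₀, 2 ^ k + 1 < (F.filter (fun B => x ∈ B)).card := by
      by_contra hcon
      push_neg at hcon
      have : ∑ x ∈ A₀, (F.filter (fun B => x ∈ B)).card ≤ k * (2 ^ k + 1) := by
        calc ∑ x ∈ A₀, (F.filter (fun B => x ∈ B)).card
            ≤ ∑ _x ∈ A₀, (2 ^ k + 1) := Finset.sum_le_sum hcon
          _ = k * (2 ^ k + 1) := by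
              rw [Finset.sum_const, smul_eq_mul, hcard A₀ hA₀]
      rw [hsum] at hsumlb
      nlinarith
    obtain ⟨x, hxA₀, hx⟩ := hpig
    -- x lies in every member of F
    have hall : ∀ E ∈ F, x ∈ E := by
      intro E hE
      by_contra hxE
      set G := F.filter (fun B => x ∈ B) with hG
      have hGcard : G.card ≤ E.powerset.card := by
        apply Finset.card_le_card_of_injOn (fun D => D ∩ E)
        · intro D _
          exact Finset.mem_powerset.mpr Finset.inter_subset_right
        · intro D hD D' hD' hDE
          have hDE' : D ∩ E = D' ∩ E := hDE
          simp only [hG, Finset.mem_coe, Finset.mem_filter] at hD hD'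
          by_contra hne
          have hcap : (D ∩ D').card = ℓ + 1 := hint D hD.1 D' hD'.1 hne
          have hDneE : D ≠ E := fun h => hxE (h ▸ hD.2)
          have hDEcard : (D ∩ E).card = ℓ + 1 := hint D hD.1 E hE hDneE
          have hsub : D ∩ E ⊆ D ∩ D' := by
            apply Finset.subset_inter Finset.inter_subset_left
            rw [hDE']; exact Finset.inter_subset_left
          have heq : D ∩ E = D ∩ D' :=
            Finset.eq_of_subset_of_card_le hsub (by omega)
          have : x ∈ D ∩ E := heq ▸ Finset.mem_inter.mpr ⟨hD.2, hD'.2⟩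
          exact hxE (Finset.mem_inter.mp this).2
      rw [Finset.card_powerset, hcard E hE] at hGcard
      omega
    -- pass to the erased family
    set F' := F.image (fun A => A.erase x) with hF'
    have hinj : Set.InjOn (fun A : Finset (Fin n) => A.erase x) (F : Set (Finset (Fin n))) := by
      intro A hA B hB h
      have h' : A.erase x = B.erase x := h
      have : insert x (A.erase x) = insert x (B.erase x) := by rw [h']
      rwa [Finset.insert_erase (hall A hA), Finset.insert_erase (hall B hB)] at this
    have hF'card : F'.card = F.card := Finset.card_image_of_injOn hinj
    have hmemF' : ∀ A' ∈ F', ∃ A ∈ F, A.erase x = A' := by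
      intro A' hA'
      simpa using Finset.mem_image.mp hA'
    have hcard' : ∀ A' ∈ F', A'.card = k - 1 := by
      intro A' hA'
      obtain ⟨A, hA, rfl⟩ := hmemF' A' hA'
      rw [Finset.card_erase_of_mem (hall A hA), hcard A hA]
    have hint' : ∀ A' ∈ F', ∀ B' ∈ F', A' ≠ B' → (A' ∩ B').card = ℓ := by
      intro A' hA' B' hB' hne
      obtain ⟨A, hA, rfl⟩ := hmemF' A' hA'
      obtain ⟨B, hB, rfl⟩ := hmemF' B' hB'
      have hAB : A ≠ B := fun h => hne (by rw [h])
      have hxAB : x ∈ A ∩ B := Finset.mem_inter.mpr ⟨hall A hA, hall B hB⟩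
      have : A.erase x ∩ B.erase x = (A ∩ B).erase x := by
        ext y; simp only [Finset.mem_inter, Finset.mem_erase]; tauto
      rw [this, Finset.card_erase_of_mem hxAB, hint A hA B hB hAB]
      omega
    have hbig' : (k - 1) * 2 ^ (k - 1) + 2 ≤ F'.card := by
      rw [hF'card]
      have h1 : (k - 1) * 2 ^ (k - 1) ≤ k * 2 ^ k :=
        Nat.mul_le_mul (Nat.sub_le k 1) (Nat.pow_le_pow_right (by norm_num) (Nat.sub_le k 1))
      omega
    obtain ⟨S', hS'card, hS'sub⟩ := ih (k - 1) F' (by omega) hcard' hint' (Or.inr hbig')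
    have hxS' : x ∉ S' := by
      intro hxS'
      have hA₀' : A₀.erase x ∈ F' := Finset.mem_image_of_mem _ hA₀
      exact (Finset.notMem_erase x A₀) (hS'sub _ hA₀' hxS')
    refine ⟨insert x S', by rw [Finset.card_insert_of_notMem hxS', hS'card], ?_⟩
    intro A hA
    refine Finset.insert_subset (hall A hA) ?_
    exact (hS'sub (A.erase x) (Finset.mem_image_of_mem _ hA)).trans (Finset.erase_subset x A)

/-- Deza–Erdős–Frankl bound in the case `|L| = 1`: an `{ℓ}`-system `F` of
`k`-subsets of `{1,...,n}` with `n > 2^k k^3` satisfies `|F| ≤ (n-ℓ)/(k-ℓ)`. -/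
theorem deza_erdos_frankl_singleton (n k ℓ : ℕ) (hℓk : ℓ < k)
    (hn : 2 ^ k * k ^ 3 < n)
    (F : Finset (Finset (Fin n)))
    (hcard : ∀ A ∈ F, A.card = k)
    (hint : ∀ A ∈ F, ∀ B ∈ F, A ≠ B → (A ∩ B).card = ℓ) :
    (F.card : ℚ) ≤ ((n : ℚ) - ℓ) / ((k : ℚ) - ℓ) := by
  have hk1 : 1 ≤ k := by omega
  have hkn : k ≤ n := by
    have h1 : k ≤ k ^ 3 := Nat.le_self_pow (by norm_num) k
    have h2 : k ^ 3 ≤ 2 ^ k * k ^ 3 := Nat.le_mul_of_pos_left _ (Nat.pow_pos (by norm_num))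
    omega
  have hℓn : ℓ ≤ n := by omega
  -- main natural number inequality
  have hmain : F.card * (k - ℓ) ≤ n - ℓ := by
    by_cases hbig : ℓ = 0 ∨ k * 2 ^ k + 2 ≤ F.card
    · -- sunflower case
      obtain ⟨S, hScard, hSsub⟩ := deza_exists_core n ℓ k F hℓk hcard hint hbig
      have hABeq : ∀ A ∈ F, ∀ B ∈ F, A ≠ B → A ∩ B = S := by
        intro A hA B hB hAB
        have hsub : S ⊆ A ∩ B := Finset.subset_inter (hSsub A hA) (hSsub B hB)
        exact (Finset.eq_of_subset_of_card_le hsub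
          (by rw [hint A hA B hB hAB, hScard])).symm
      have hdisj : ∀ A ∈ F, ∀ B ∈ F, A ≠ B → Disjoint (A \ S) (B \ S) := by
        intro A hA B hB hAB
        rw [Finset.disjoint_left]
        intro a ha hb
        rw [Finset.mem_sdiff] at ha hb
        have : a ∈ A ∩ B := Finset.mem_inter.mpr ⟨ha.1, hb.1⟩
        rw [hABeq A hA B hB hAB] at this
        exact ha.2 this
      have hcup := Finset.card_biUnion hdisj
      have hsub : F.biUnion (fun A => A \ S) ⊆ Sᶜ := by
        intro a ha
        obtain ⟨A, _, haA⟩ := Finset.mem_biUnion.mp ha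
        rw [Finset.mem_compl]
        exact (Finset.mem_sdiff.mp haA).2
      have hcompl : (Sᶜ : Finset (Fin n)).card = n - ℓ := by
        rw [Finset.card_compl, hScard, Fintype.card_fin]
      have hsdcard : ∀ A ∈ F, (A \ S).card = k - ℓ := by
        intro A hA
        rw [Finset.card_sdiff_of_subset (hSsub A hA), hcard A hA, hScard]
      calc F.card * (k - ℓ) = ∑ A ∈ F, (A \ S).card := by
            rw [Finset.sum_congr rfl hsdcard, Finset.sum_const, smul_eq_mul]
        _ = (F.biUnion (fun A => A \ S)).card := hcup.symm
        _ ≤ (Sᶜ : Finset (Fin n)).card := Finset.card_le_card hsub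
        _ = n - ℓ := hcompl
    · -- small family case
      push_neg at hbig
      obtain ⟨hℓ0, hsmall⟩ := hbig
      have hk2 : 2 ≤ k := by omega
      have hFle : F.card ≤ k * 2 ^ k + 1 := by omega
      have h1 : F.card * (k - ℓ) ≤ (k * 2 ^ k + 1) * k :=
        Nat.mul_le_mul hFle (Nat.sub_le k ℓ)
      have hP : 4 ≤ 2 ^ k := by
        calc (4 : ℕ) = 2 ^ 2 := by norm_num
        _ ≤ 2 ^ k := Nat.pow_le_pow_right (by norm_num) hk2
      have h2 : (k * 2 ^ k + 1) * k + k ≤ 2 ^ k * k ^ 3 + 1 := by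
        have hkk : 2 * k ≤ 2 ^ k * k ^ 2 := by nlinarith
        nlinarith
      omega
  -- cast to ℚ
  have hkq : (0 : ℚ) < (k : ℚ) - (ℓ : ℚ) := by
    rw [sub_pos]; exact_mod_cast hℓk
  rw [le_div_iff₀ hkq]
  have hcast : ((F.card * (k - ℓ) : ℕ) : ℚ) ≤ ((n - ℓ : ℕ) : ℚ) := by
    exact_mod_cast hmain
  push_cast [Nat.cast_sub hℓk.le, Nat.cast_sub hℓn] at hcast
  convert hcast using 1 <;> push_cast [Nat.cast_sub hℓk.le, Nat.cast_sub hℓn] <;> ring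
end
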